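/- arXiv:2303.03108 — 2 statements merged into one kernel-verified Lean document; each statement's English description precedes it below -/
import Mathlib

section
/- Let L : ℝ^d → ℝ be differentiable and γ₁-Lipschitz smooth, let θ ∈ ℝ^d, and let η, ρ ≥ 0 and α ≥ 0 be constants. Let h_loss and h_norm be random vectors in ℝ^d on some probability space such that E[h_loss] = ∇L(θ), ‖h_loss‖ ≤ G̃ almost surely, and ‖h_norm‖ ≤ G_n almost surely, for constants G̃, G_n ≥ 0. Then the updated point θ' = θ − η(h_loss + α ρ h_norm) satisfies E[L(θ')] ≤ L(θ) − η‖∇L(θ)‖² + η ρ α G̃ G_n + γ₁ η² (G̃² + α² ρ² G_n²). -/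
/-!
By the descent lemma for a `γ₁`-smooth function, `L θ'` is bounded pointwise by
`L θ - η ⟪∇L θ, h_loss⟫ - η α ρ ⟪∇L θ, h_norm⟫ + (γ₁ / 2) η² ‖h_loss + α ρ h_norm‖²`.
Since `‖∇L θ‖ = ‖E[h_loss]‖ ≤ G̃`, Cauchy–Schwarz bounds the cross term by `η α ρ G̃ G_n`, and
`(a + b)² ≤ 2 (a² + b²)` bounds the quadratic one. Taking expectations turns
`⟪∇L θ, h_loss⟫` into `‖∇L θ‖²`; the integral exists because `L` is continuous and `θ'` stays in
a fixed closed ball.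
-/

open MeasureTheory
open scoped ProbabilityTheory RealInnerProductSpace

theorem norm_add_smul_le_of_le {E : Type*} [SeminormedAddCommGroup E] [NormedSpace ℝ E]
    {a b : E} {c A B : ℝ} (hc : 0 ≤ c) (ha : ‖a‖ ≤ A) (hb : ‖b‖ ≤ B) :
    ‖a + c • b‖ ≤ A + c * B :=
  calc ‖a + c • b‖ ≤ ‖a‖ + c * ‖b‖ := by
        simpa [norm_smul, Real.norm_of_nonneg hc] using norm_add_le a (c • b)
    _ ≤ A + c * B := by gcongr

theorem Continuous.integrable_comp_of_ae_dist_le {Ω E F : Type*} [MeasurableSpace Ω]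
    {μ : Measure Ω} [IsFiniteMeasure μ] [PseudoMetricSpace E] [ProperSpace E]
    [NormedAddCommGroup F] {f : E → F} (hf : Continuous f) {X : Ω → E}
    (hX : AEStronglyMeasurable X μ) {x₀ : E} {R : ℝ} (hR : ∀ᵐ ω ∂μ, dist (X ω) x₀ ≤ R) :
    Integrable (fun ω => f (X ω)) μ := by
  obtain ⟨C, hC⟩ := (isCompact_closedBall x₀ R).exists_bound_of_continuousOn hf.continuousOn
  exact .of_bound (hf.comp_aestronglyMeasurable hX) C (hR.mono fun ω hω => hC _ hω)

section LipschitzGradient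

variable {F : Type*} [NormedAddCommGroup F] [InnerProductSpace ℝ F] [CompleteSpace F]

theorem HasGradientAt.hasDerivAt_comp_add_smul {f : F → ℝ} {g x v : F} {t : ℝ}
    (h : HasGradientAt f g (x + t • v)) :
    HasDerivAt (fun s : ℝ => f (x + s • v)) ⟪g, v⟫ t := by
  have hline : HasDerivAt (fun s : ℝ => x + s • v) v t := by
    simpa using ((hasDerivAt_id t).smul_const v).const_add x
  have := h.hasFDerivAt.comp_hasDerivAt t hline
  rwa [InnerProductSpace.toDual_apply_apply] at this

theorem le_add_inner_gradient_add_of_lipschitz_gradient {f : F → ℝ} {γ : ℝ}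
    (hf : Differentiable ℝ f) (hsmooth : ∀ x y, ‖gradient f x - gradient f y‖ ≤ γ * ‖x - y‖)
    (x y : F) : f y ≤ f x + ⟪gradient f x, y - x⟫ + γ / 2 * ‖y - x‖ ^ 2 := by
  set v := y - x
  set φ : ℝ → ℝ := fun t => f (x + t • v) - t * ⟪gradient f x, v⟫ - γ / 2 * t ^ 2 * ‖v‖ ^ 2
  have hφ : ∀ t, HasDerivAt φ (⟪gradient f (x + t • v) - gradient f x, v⟫ - γ * t * ‖v‖ ^ 2) t := by
    intro t
    have := (((hf (x + t • v)).hasGradientAt.hasDerivAt_comp_add_smul).sub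
      ((hasDerivAt_id t).mul_const ⟪gradient f x, v⟫)).sub
      (((hasDerivAt_pow 2 t).const_mul (γ / 2)).mul_const (‖v‖ ^ 2))
    refine this.congr_deriv ?_
    rw [inner_sub_left]
    ring
  have hφ_nonpos : ∀ t, 0 ≤ t → ⟪gradient f (x + t • v) - gradient f x, v⟫ - γ * t * ‖v‖ ^ 2 ≤ 0 := by
    intro t ht
    have := calc ⟪gradient f (x + t • v) - gradient f x, v⟫
        ≤ ‖gradient f (x + t • v) - gradient f x‖ * ‖v‖ := real_inner_le_norm _ _
      _ ≤ γ * ‖x + t • v - x‖ * ‖v‖ := by gcongr; exact hsmooth _ _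
      _ = γ * t * ‖v‖ ^ 2 := by
        rw [add_sub_cancel_left, norm_smul, Real.norm_of_nonneg ht]; ring
    linarith
  have hanti : AntitoneOn φ (Set.Ici 0) :=
    antitoneOn_of_hasDerivWithinAt_nonpos (convex_Ici 0)
      (fun t _ => (hφ t).continuousAt.continuousWithinAt)
      (fun t _ => (hφ t).hasDerivWithinAt)
      (fun t ht => hφ_nonpos t (le_of_lt (by simpa using ht)))
  have h10 : φ 1 ≤ φ 0 := hanti Set.self_mem_Ici (Set.mem_Ici.2 zero_le_one) zero_le_one
  simp only [φ, one_smul, zero_smul, add_zero, v, add_sub_cancel] at h10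
  linarith

theorem gam_step_le {L : F → ℝ} {γ : ℝ} (hγ : 0 ≤ γ) (hL : Differentiable ℝ L)
    (hsmooth : ∀ x y, ‖gradient L x - gradient L y‖ ≤ γ * ‖x - y‖) {θ a b : F} {η c Gt Gn : ℝ}
    (hη : 0 ≤ η) (hc : 0 ≤ c) (hgrad : ‖gradient L θ‖ ≤ Gt) (ha : ‖a‖ ≤ Gt) (hb : ‖b‖ ≤ Gn) :
    L (θ - η • (a + c • b))
      ≤ L θ - η * ⟪gradient L θ, a⟫ + η * c * Gt * Gn + γ * η ^ 2 * (Gt ^ 2 + c ^ 2 * Gn ^ 2) := by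
  set g := gradient L θ
  have hdescent := le_add_inner_gradient_add_of_lipschitz_gradient hL hsmooth θ (θ - η • (a + c • b))
  rw [sub_sub_cancel_left, inner_neg_right, norm_neg, inner_smul_right, inner_add_right,
    inner_smul_right, norm_smul, Real.norm_of_nonneg hη] at hdescent
  have hcross : -(η * (c * ⟪g, b⟫)) ≤ η * c * Gt * Gn := by
    have hgb : -(Gt * Gn) ≤ ⟪g, b⟫ :=
      (neg_le_neg (mul_le_mul hgrad hb (norm_nonneg b) ((norm_nonneg g).trans hgrad))).trans
        (neg_le_of_abs_le (abs_real_inner_le_norm g b))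
    nlinarith [mul_nonneg hη hc]
  have hquad : γ / 2 * (η * ‖a + c • b‖) ^ 2 ≤ γ * η ^ 2 * (Gt ^ 2 + c ^ 2 * Gn ^ 2) := by
    have hu : ‖a + c • b‖ ^ 2 ≤ 2 * (Gt ^ 2 + c ^ 2 * Gn ^ 2) :=
      calc ‖a + c • b‖ ^ 2 ≤ (Gt + c * Gn) ^ 2 := by
            gcongr; exact norm_add_smul_le_of_le hc ha hb
        _ ≤ 2 * (Gt ^ 2 + c ^ 2 * Gn ^ 2) := by rw [← mul_pow]; exact add_sq_le
    calc γ / 2 * (η * ‖a + c • b‖) ^ 2 = γ / 2 * η ^ 2 * ‖a + c • b‖ ^ 2 := by ring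
      _ ≤ γ / 2 * η ^ 2 * (2 * (Gt ^ 2 + c ^ 2 * Gn ^ 2)) := by gcongr
      _ = γ * η ^ 2 * (Gt ^ 2 + c ^ 2 * Gn ^ 2) := by ring
  linarith

end LipschitzGradient

theorem gam_descent_inequality_general
    {d : ℕ} {Ω : Type*} [MeasureSpace Ω] [IsProbabilityMeasure (ℙ : Measure Ω)]
    (L : EuclideanSpace ℝ (Fin d) → ℝ) (γ₁ : ℝ) (hγ₁ : 0 ≤ γ₁)
    (hL : Differentiable ℝ L)
    (hsmooth : ∀ θ₁ θ₂ : EuclideanSpace ℝ (Fin d),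
      ‖gradient L θ₁ - gradient L θ₂‖ ≤ γ₁ * ‖θ₁ - θ₂‖)
    (θ : EuclideanSpace ℝ (Fin d)) (η ρ α : ℝ) (hη : 0 ≤ η) (hρ : 0 ≤ ρ) (hα : 0 ≤ α)
    (hloss hnorm : Ω → EuclideanSpace ℝ (Fin d))
    (hlossMeas : AEStronglyMeasurable hloss (ℙ : Measure Ω)) (hnormMeas : AEStronglyMeasurable hnorm (ℙ : Measure Ω))
    (Gt Gn : ℝ)
    (hmean : ∫ ω, hloss ω ∂(ℙ : Measure Ω) = gradient L θ)
    (hlossBdd : ∀ᵐ ω ∂(ℙ : Measure Ω), ‖hloss ω‖ ≤ Gt)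
    (hnormBdd : ∀ᵐ ω ∂(ℙ : Measure Ω), ‖hnorm ω‖ ≤ Gn) :
    ∫ ω, L (θ - η • (hloss ω + (α * ρ) • hnorm ω)) ∂(ℙ : Measure Ω)
      ≤ L θ - η * ‖gradient L θ‖ ^ 2 + η * ρ * α * Gt * Gn
          + γ₁ * η ^ 2 * (Gt ^ 2 + α ^ 2 * ρ ^ 2 * Gn ^ 2) := by
  set g := gradient L θ
  set C := L θ + η * ρ * α * Gt * Gn + γ₁ * η ^ 2 * (Gt ^ 2 + α ^ 2 * ρ ^ 2 * Gn ^ 2)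
  have hαρ : 0 ≤ α * ρ := mul_nonneg hα hρ
  have hgrad : ‖g‖ ≤ Gt := by simpa [hmean] using norm_integral_le_of_norm_le_const hlossBdd
  have hlossInt : Integrable hloss ℙ := .of_bound hlossMeas Gt hlossBdd
  have hstep : ∀ᵐ ω ∂(ℙ : Measure Ω),
      L (θ - η • (hloss ω + (α * ρ) • hnorm ω)) ≤ C - η * ⟪g, hloss ω⟫ := by
    filter_upwards [hlossBdd, hnormBdd] with ω hω₁ hω₂
    have := gam_step_le hγ₁ hL hsmooth hη hαρ hgrad hω₁ hω₂
    linarith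
  have hstepInt : Integrable (fun ω => L (θ - η • (hloss ω + (α * ρ) • hnorm ω))) ℙ := by
    have hmeas : AEStronglyMeasurable (fun ω => θ - η • (hloss ω + (α * ρ) • hnorm ω)) ℙ :=
      aestronglyMeasurable_const.sub ((hlossMeas.add (hnormMeas.const_smul (α * ρ))).const_smul η)
    refine hL.continuous.integrable_comp_of_ae_dist_le hmeas (x₀ := θ) (R := η * (Gt + α * ρ * Gn)) ?_
    filter_upwards [hlossBdd, hnormBdd] with ω hω₁ hω₂
    rw [dist_eq_norm, sub_sub_cancel_left, norm_neg, norm_smul, Real.norm_of_nonneg hη]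
    exact mul_le_mul_of_nonneg_left (norm_add_smul_le_of_le hαρ hω₁ hω₂) hη
  calc ∫ ω, L (θ - η • (hloss ω + (α * ρ) • hnorm ω)) ∂ℙ
      ≤ ∫ ω, (C - η * ⟪g, hloss ω⟫) ∂ℙ :=
        integral_mono_ae hstepInt ((integrable_const C).sub ((hlossInt.const_inner g).const_mul η))
          hstep
    _ = C - η * ‖g‖ ^ 2 := by
        rw [integral_sub (integrable_const C) ((hlossInt.const_inner g).const_mul η),
          integral_const, integral_const_mul, integral_inner hlossInt, hmean,
          real_inner_self_eq_norm_sq]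
        simp
    _ = _ := by ring

/-- **Per-iteration descent inequality of GAM.**
Let `L : ℝ^d → ℝ` be differentiable and `γ₁`-Lipschitz smooth, and let `hloss`, `hnorm` be
random vectors with `E[hloss] = ∇L(θ)`, `‖hloss‖ ≤ G̃` a.s., `‖hnorm‖ ≤ Gn` a.s. Then the
updated point `θ' = θ - η (hloss + α ρ hnorm)` satisfies
`E[L(θ')] ≤ L(θ) - η‖∇L(θ)‖² + η ρ α G̃ Gn + γ₁ η² (G̃² + α² ρ² Gn²)`. -/
theorem gam_descent_inequality
    {d : ℕ} {Ω : Type*} [MeasureSpace Ω] [IsProbabilityMeasure (ℙ : Measure Ω)]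
    (L : EuclideanSpace ℝ (Fin d) → ℝ) (γ₁ : ℝ) (hγ₁ : 0 ≤ γ₁)
    (hL : Differentiable ℝ L)
    (hsmooth : ∀ θ₁ θ₂ : EuclideanSpace ℝ (Fin d),
      ‖gradient L θ₁ - gradient L θ₂‖ ≤ γ₁ * ‖θ₁ - θ₂‖)
    (θ : EuclideanSpace ℝ (Fin d)) (η ρ α : ℝ) (hη : 0 ≤ η) (hρ : 0 ≤ ρ) (hα : 0 ≤ α)
    (hloss hnorm : Ω → EuclideanSpace ℝ (Fin d))
    (hlossMeas : AEStronglyMeasurable hloss (ℙ : Measure Ω)) (hnormMeas : AEStronglyMeasurable hnorm (ℙ : Measure Ω))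
    (Gt Gn : ℝ) (hGt : 0 ≤ Gt) (hGn : 0 ≤ Gn)
    (hmean : ∫ ω, hloss ω ∂(ℙ : Measure Ω) = gradient L θ)
    (hlossBdd : ∀ᵐ ω ∂(ℙ : Measure Ω), ‖hloss ω‖ ≤ Gt)
    (hnormBdd : ∀ᵐ ω ∂(ℙ : Measure Ω), ‖hnorm ω‖ ≤ Gn) :
    ∫ ω, L (θ - η • (hloss ω + (α * ρ) • hnorm ω)) ∂(ℙ : Measure Ω)
      ≤ L θ - η * ‖gradient L θ‖ ^ 2 + η * ρ * α * Gt * Gn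
          + γ₁ * η ^ 2 * (Gt ^ 2 + α ^ 2 * ρ ^ 2 * Gn ^ 2) :=
  gam_descent_inequality_general L γ₁ hγ₁ hL hsmooth θ η ρ α hη hρ hα hloss hnorm hlossMeas
    hnormMeas Gt Gn hmean hlossBdd hnormBdd
end

section
/- Let L^oracle : ℝ^d → ℝ be differentiable and γ₁-Lipschitz smooth with |L^oracle(θ)| ≤ M for all θ. Let (Ω, F, P) be a probability space with a filtration (F_t)_{t≥1}, and let constants G̃, G_n ≥ 0, α ≥ 0, η₀ > 0, ρ₀ > 0 be given; set η_t = η₀/√t and ρ_t = ρ₀/√t. Let (θ_t)_{t≥1} be random vectors in ℝ^d with θ_t measurable with respect to F_t, generated by θ_{t+1} = θ_t − η_t (h_t^loss + α ρ_t h_t^norm), where h_t^loss and h_t^norm are F_{t+1}-measurable random vectors satisfying: (a) E[h_t^loss | F_t] = ∇L^oracle(θ_t) almost surely, (b) ‖h_t^loss‖ ≤ G̃ almost surely, and (c) ‖h_t^norm‖ ≤ G_n almost surely. Then there exist constants C₁' and C₂' depending only on γ₁, G̃, G_n, M, η₀, ρ₀, and α such that for every T ≥ 1: (1/T) Σ_{t=1}^T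 E[ ‖∇L^oracle(θ_t)‖² ] ≤ (C₁' + C₂' log T)/√T. -/
/-!
Smoothness gives the descent inequality `f y ≤ f x + ⟪∇f x, y - x⟫ + γ/2 ‖y - x‖²`; applied at
`y = x - ∇f x / γ` it also bounds `‖∇f‖² ≤ 4γM` for `|f| ≤ M`. At a GAM step the unbiasedness of
`h_t^loss` turns `E⟪∇f(θ_t), h_t^loss⟫` into `E‖∇f(θ_t)‖²` by the pull-out property, while the
perturbation term (of size `η_t ρ_t ∼ 1/t`) and the quadratic term (of size `η_t² ∼ 1/t`) are
bounded. Hence `η_t E‖∇f(θ_t)‖² ≤ E f(θ_t) - E f(θ_{t+1}) + K/t`; summing, the values telescope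
to at most `2M`, the errors to `K(1 + log T)`, and `η_t ≥ η₀/√T` gives the rate.
-/

open MeasureTheory Finset

open RealInnerProductSpace

section Smooth

variable {E : Type*} [NormedAddCommGroup E] [InnerProductSpace ℝ E] [CompleteSpace E]
  {f : E → ℝ} {K : NNReal}

theorem image_le_add_inner_gradient_add_sq (hf : Differentiable ℝ f)
    (hK : LipschitzWith K (gradient f)) (x y : E) :
    f y ≤ f x + ⟪gradient f x, y - x⟫ + K / 2 * ‖y - x‖ ^ 2 := by
  set v := y - x
  set φ : ℝ → ℝ := fun s => f (x + s • v) - s * ⟪gradient f x, v⟫ - K / 2 * s ^ 2 * ‖v‖ ^ 2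
  have hφ : ∀ s, HasDerivAt φ
      (⟪gradient f (x + s • v), v⟫ - ⟪gradient f x, v⟫ - K * s * ‖v‖ ^ 2) s := by
    intro s
    have hline : HasDerivAt (fun s : ℝ => x + s • v) v s := by
      simpa using ((hasDerivAt_id s).smul_const v).const_add x
    have hcomp := (hf (x + s • v)).hasFDerivAt.comp_hasDerivAt s hline
    rw [← inner_gradient_left] at hcomp
    exact ((hcomp.sub ((hasDerivAt_id s).mul_const ⟪gradient f x, v⟫)).sub
      (((hasDerivAt_pow 2 s).const_mul (K / 2 : ℝ)).mul_const (‖v‖ ^ 2))).congr_deriv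
      (by rw [Nat.cast_ofNat]; ring)
  have hanti : AntitoneOn φ (Set.Ici 0) := by
    refine antitoneOn_of_deriv_nonpos (convex_Ici 0)
      (fun s _ => (hφ s).continuousAt.continuousWithinAt)
      (fun s _ => (hφ s).differentiableAt.differentiableWithinAt) fun s hs => ?_
    rw [interior_Ici] at hs
    rw [(hφ s).deriv, ← inner_sub_left, sub_nonpos]
    calc ⟪gradient f (x + s • v) - gradient f x, v⟫
        ≤ ‖gradient f (x + s • v) - gradient f x‖ * ‖v‖ := real_inner_le_norm _ _
      _ ≤ K * ‖(x + s • v) - x‖ * ‖v‖ := by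
          gcongr; exact hK.norm_sub_le _ _
      _ = K * s * ‖v‖ ^ 2 := by
          rw [add_sub_cancel_left, norm_smul, Real.norm_of_nonneg (le_of_lt hs)]; ring
  have h : φ 1 ≤ φ 0 := hanti Set.self_mem_Ici (Set.mem_Ici.2 zero_le_one) zero_le_one
  simp only [φ, one_smul, zero_smul, add_zero, one_mul, zero_mul, one_pow, sub_zero, v,
    add_sub_cancel, ne_eq, OfNat.ofNat_ne_zero, not_false_eq_true, zero_pow, mul_zero] at h
  linarith

theorem sq_norm_gradient_le (hf : Differentiable ℝ f) (hK : LipschitzWith K (gradient f))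
    {M : ℝ} (hM : ∀ x, |f x| ≤ M) (x : E) : ‖gradient f x‖ ^ 2 ≤ 4 * K * M := by
  set g := gradient f x
  have key : ∀ s : ℝ, s * ‖g‖ ^ 2 * (1 - K * s / 2) ≤ 2 * M := by
    intro s
    have h := image_le_add_inner_gradient_add_sq hf hK x (x - s • g)
    rw [sub_sub_cancel_left, inner_neg_right, real_inner_smul_right, real_inner_self_eq_norm_sq,
      norm_neg, norm_smul, mul_pow, Real.norm_eq_abs, sq_abs] at h
    linarith [abs_le.mp (hM x), abs_le.mp (hM (x - s • g))]
  rcases K.coe_nonneg.eq_or_lt with hK0 | hK0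
  · simp only [← hK0, zero_mul, mul_zero, zero_div, sub_zero, mul_one] at key ⊢
    by_contra! hg
    have h := key ((2 * M + 1) / ‖g‖ ^ 2)
    rw [div_mul_cancel₀ _ hg.ne'] at h
    linarith
  · have h := key (1 / K)
    rw [show 1 / (K : ℝ) * ‖g‖ ^ 2 * (1 - K * (1 / K) / 2) = ‖g‖ ^ 2 / (2 * K) by
      field_simp; ring, div_le_iff₀ (by positivity)] at h
    linarith

theorem mul_inner_gradient_le_of_descent_step (hf : Differentiable ℝ f)
    (hK : LipschitzWith K (gradient f)) {B G Gn η c : ℝ} (hη : 0 ≤ η) (hc : 0 ≤ c) {x h u : E}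
    (hB : ‖gradient f x‖ ≤ B) (hG : ‖h‖ ≤ G) (hGn : ‖u‖ ≤ Gn) :
    η * ⟪gradient f x, h⟫ ≤ f x - f (x - η • (h + c • u))
      + (η * c * (B * Gn) + K / 2 * η ^ 2 * (G + c * Gn) ^ 2) := by
  have hdesc := image_le_add_inner_gradient_add_sq hf hK x (x - η • (h + c • u))
  rw [sub_sub_cancel_left, inner_neg_right, real_inner_smul_right, inner_add_right,
    real_inner_smul_right, norm_neg, norm_smul, mul_pow, Real.norm_eq_abs, sq_abs] at hdesc
  have hgu : -(B * Gn) ≤ ⟪gradient f x, u⟫ :=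
    neg_le_of_abs_le <| (abs_real_inner_le_norm _ _).trans <|
      mul_le_mul hB hGn (norm_nonneg _) ((norm_nonneg _).trans hB)
  have hw : ‖h + c • u‖ ^ 2 ≤ (G + c * Gn) ^ 2 := by
    refine pow_le_pow_left₀ (norm_nonneg _) ?_ 2
    calc ‖h + c • u‖ ≤ ‖h‖ + c * ‖u‖ := by
          simpa [norm_smul, abs_of_nonneg hc] using norm_add_le h (c • u)
      _ ≤ G + c * Gn := by gcongr
  nlinarith [mul_le_mul_of_nonneg_left hgu (mul_nonneg hη hc),
    mul_le_mul_of_nonneg_left hw (by positivity : (0 : ℝ) ≤ K / 2 * η ^ 2)]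

variable {Ω : Type*} {m mΩ : MeasurableSpace Ω} {μ : Measure Ω}

theorem integral_inner_eq_integral_sq_norm_of_condExp_eq (hm : m ≤ mΩ) [SigmaFinite (μ.trim hm)]
    {g h : Ω → E} (hg : StronglyMeasurable[m] g) (hgh : Integrable (fun ω => ⟪g ω, h ω⟫) μ)
    (hh : Integrable h μ) (hce : μ[h|m] =ᵐ[μ] g) :
    ∫ ω, ⟪g ω, h ω⟫ ∂μ = ∫ ω, ‖g ω‖ ^ 2 ∂μ := by
  have hpull : μ[fun ω => ⟪g ω, h ω⟫|m] =ᵐ[μ] fun ω => ⟪g ω, μ[h|m] ω⟫ :=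
    condExp_bilin_of_stronglyMeasurable_left (innerSL ℝ) hg hgh hh
  calc ∫ ω, ⟪g ω, h ω⟫ ∂μ = ∫ ω, μ[fun ω => ⟪g ω, h ω⟫|m] ω ∂μ := (integral_condExp hm).symm
    _ = ∫ ω, ‖g ω‖ ^ 2 ∂μ := integral_congr_ae <| by
      filter_upwards [hpull, hce] with ω h1 h2
      rw [h1, h2, real_inner_self_eq_norm_sq]

theorem mul_integral_sq_norm_gradient_le_of_descent_step [IsProbabilityMeasure μ]
    (hf : Differentiable ℝ f) (hK : LipschitzWith K (gradient f)) {M B G Gn η c : ℝ}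
    (hM : ∀ x, |f x| ≤ M) (hB : ∀ x, ‖gradient f x‖ ≤ B) (hη : 0 ≤ η) (hc : 0 ≤ c)
    (hm : m ≤ mΩ) {x h u : Ω → E} (hx : StronglyMeasurable[m] x) (hh : AEStronglyMeasurable h μ)
    (hu : AEStronglyMeasurable u μ) (hce : μ[h|m] =ᵐ[μ] fun ω => gradient f (x ω))
    (hhG : ∀ᵐ ω ∂μ, ‖h ω‖ ≤ G) (huG : ∀ᵐ ω ∂μ, ‖u ω‖ ≤ Gn) :
    η * ∫ ω, ‖gradient f (x ω)‖ ^ 2 ∂μ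
      ≤ ∫ ω, f (x ω) ∂μ - ∫ ω, f (x ω - η • (h ω + c • u ω)) ∂μ
        + (η * c * (B * Gn) + K / 2 * η ^ 2 * (G + c * Gn) ^ 2) := by
  have hgx : StronglyMeasurable[m] fun ω => gradient f (x ω) :=
    hK.continuous.comp_stronglyMeasurable hx
  have hf_int : ∀ y : Ω → E, AEStronglyMeasurable y μ → Integrable (fun ω => f (y ω)) μ :=
    fun y hy => .of_bound (hf.continuous.comp_aestronglyMeasurable hy) M
      (ae_of_all _ fun ω => hM (y ω))
  have hgh_int : Integrable (fun ω => ⟪gradient f (x ω), h ω⟫) μ := by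
    refine .of_bound ((hgx.mono hm).aestronglyMeasurable.inner hh) (B * G) ?_
    filter_upwards [hhG] with ω hω
    exact (norm_inner_le_norm _ _).trans
      (mul_le_mul (hB _) hω (norm_nonneg _) ((norm_nonneg _).trans (hB 0)))
  have hx_int := hf_int x (hx.mono hm).aestronglyMeasurable
  have hx'_int := hf_int (fun ω => x ω - η • (h ω + c • u ω))
    ((hx.mono hm).aestronglyMeasurable.sub ((hh.add (hu.const_smul c)).const_smul η))
  have hdiff : Integrable (fun ω => f (x ω) - f (x ω - η • (h ω + c • u ω))) μ :=
    hx_int.sub hx'_int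
  have hstep : ∀ᵐ ω ∂μ, η * ⟪gradient f (x ω), h ω⟫
      ≤ f (x ω) - f (x ω - η • (h ω + c • u ω))
        + (η * c * (B * Gn) + K / 2 * η ^ 2 * (G + c * Gn) ^ 2) := by
    filter_upwards [hhG, huG] with ω hhω huω
    exact mul_inner_gradient_le_of_descent_step hf hK hη hc (hB _) hhω huω
  calc η * ∫ ω, ‖gradient f (x ω)‖ ^ 2 ∂μ = ∫ ω, η * ⟪gradient f (x ω), h ω⟫ ∂μ := by
        rw [integral_const_mul, integral_inner_eq_integral_sq_norm_of_condExp_eq hm hgx hgh_int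
          (.of_bound hh G hhG) hce]
    _ ≤ ∫ ω, (f (x ω) - f (x ω - η • (h ω + c • u ω))
          + (η * c * (B * Gn) + K / 2 * η ^ 2 * (G + c * Gn) ^ 2)) ∂μ :=
        integral_mono_ae (hgh_int.const_mul η) (hdiff.add (integrable_const _)) hstep
    _ = _ := by
        rw [integral_add hdiff (integrable_const _), integral_sub hx_int hx'_int,
          integral_const, probReal_univ, one_smul]

end Smooth

theorem sqrt_schedule_error_le {K B G Gn η₀ α ρ₀ : ℝ} (hK : 0 ≤ K) (hG : 0 ≤ G) (hGn : 0 ≤ Gn)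
    (hα : 0 ≤ α) (hρ₀ : 0 ≤ ρ₀) {t : ℕ} (ht : 1 ≤ t) :
    η₀ / √t * (α * (ρ₀ / √t)) * (B * Gn) + K / 2 * (η₀ / √t) ^ 2 * (G + α * (ρ₀ / √t) * Gn) ^ 2
      ≤ (η₀ * (α * ρ₀) * (B * Gn) + K / 2 * η₀ ^ 2 * (G + α * ρ₀ * Gn) ^ 2) * (t : ℝ)⁻¹ := by
  have hsqrt : 1 ≤ √(t : ℝ) := Real.one_le_sqrt.2 (by exact_mod_cast ht)
  have hc : α * (ρ₀ / √t) ≤ α * ρ₀ := by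
    gcongr; exact div_le_self hρ₀ hsqrt
  have hsq : (√(t : ℝ)) ^ 2 = t := Real.sq_sqrt (Nat.cast_nonneg t)
  calc η₀ / √t * (α * (ρ₀ / √t)) * (B * Gn) + K / 2 * (η₀ / √t) ^ 2 * (G + α * (ρ₀ / √t) * Gn) ^ 2
      = (η₀ * (α * ρ₀) * (B * Gn) + K / 2 * η₀ ^ 2 * (G + α * (ρ₀ / √t) * Gn) ^ 2)
          * (t : ℝ)⁻¹ := by
        field_simp; rw [hsq]; ring
    _ ≤ _ := by gcongr

theorem sum_Icc_sub_succ (a : ℕ → ℝ) (T : ℕ) :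
    ∑ t ∈ Icc 1 T, (a t - a (t + 1)) = a 1 - a (T + 1) := by
  rw [← Finset.Ico_add_one_right_eq_Icc, ← neg_sub, ← Finset.sum_Ico_sub a (Nat.le_add_left 1 T),
    ← sum_neg_distrib]
  simp only [neg_sub]

theorem sum_Icc_inv_le_one_add_log (T : ℕ) : ∑ t ∈ Icc 1 T, (t : ℝ)⁻¹ ≤ 1 + Real.log T := by
  have h := harmonic_le_one_add_log T
  rw [harmonic_eq_sum_Icc] at h
  push_cast at h
  exact h

theorem mean_le_of_sqrt_descent_step {a e : ℕ → ℝ} {M K η₀ : ℝ} (hη₀ : 0 < η₀) (hK : 0 ≤ K)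
    (ha : ∀ t, |a t| ≤ M) (he : ∀ t, 0 ≤ e t)
    (hstep : ∀ t : ℕ, 1 ≤ t → η₀ / √t * e t ≤ a t - a (t + 1) + K * (t : ℝ)⁻¹)
    {T : ℕ} (hT : 1 ≤ T) :
    (1 / T : ℝ) * ∑ t ∈ Icc 1 T, e t ≤ ((2 * M + K) / η₀ + K / η₀ * Real.log T) / √T := by
  have hT0 : (0 : ℝ) < T := by exact_mod_cast hT
  have hsum : η₀ / √T * ∑ t ∈ Icc 1 T, e t ≤ 2 * M + K * (1 + Real.log T) := by
    calc η₀ / √T * ∑ t ∈ Icc 1 T, e t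
        ≤ ∑ t ∈ Icc 1 T, (a t - a (t + 1) + K * (t : ℝ)⁻¹) := by
          rw [mul_sum]
          refine sum_le_sum fun t ht => ?_
          obtain ⟨ht1, htT⟩ := mem_Icc.mp ht
          refine le_trans (mul_le_mul_of_nonneg_right ?_ (he t)) (hstep t ht1)
          gcongr
      _ = a 1 - a (T + 1) + K * ∑ t ∈ Icc 1 T, (t : ℝ)⁻¹ := by
          rw [sum_add_distrib, sum_Icc_sub_succ, mul_sum]
      _ ≤ 2 * M + K * (1 + Real.log T) := by
          gcongr
          · linarith [abs_le.mp (ha 1), abs_le.mp (ha (T + 1))]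
          · exact sum_Icc_inv_le_one_add_log T
  have hsqrt : √(T : ℝ) * √T = T := Real.mul_self_sqrt hT0.le
  have hsqrt0 : 0 < √(T : ℝ) := Real.sqrt_pos.2 hT0
  rw [div_mul_eq_mul_div, div_le_iff₀ hsqrt0] at hsum
  calc (1 / T : ℝ) * ∑ t ∈ Icc 1 T, e t = (η₀ * ∑ t ∈ Icc 1 T, e t) / (η₀ * (√T * √T)) := by
        rw [hsqrt]; field_simp
    _ ≤ (2 * M + K * (1 + Real.log T)) * √T / (η₀ * (√T * √T)) := by gcongr
    _ = ((2 * M + K) / η₀ + K / η₀ * Real.log T) / √T := by field_simp; ring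

theorem gam_oracle_convergence_general
    (γ₁ Gt Gn M α η₀ ρ₀ : ℝ) (hGt : 0 ≤ Gt) (hGn : 0 ≤ Gn)
    (hα : 0 ≤ α) (hη₀ : 0 < η₀) (hρ₀ : 0 < ρ₀) :
    ∃ C₁ C₂ : ℝ,
      ∀ {d : ℕ} (Loracle : EuclideanSpace ℝ (Fin d) → ℝ),
        Differentiable ℝ Loracle →
        (∀ θ₁ θ₂ : EuclideanSpace ℝ (Fin d),
          ‖gradient Loracle θ₁ - gradient Loracle θ₂‖ ≤ γ₁ * ‖θ₁ - θ₂‖) →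
        (∀ x, |Loracle x| ≤ M) →
        ∀ (Ω : Type) (mΩ : MeasurableSpace Ω) (μ : Measure Ω),
          IsProbabilityMeasure μ →
          ∀ (ℱ : Filtration ℕ mΩ)
            (θ hloss hnorm : ℕ → Ω → EuclideanSpace ℝ (Fin d)),
            (∀ t, StronglyMeasurable[ℱ t] (θ t)) →
            (∀ t, StronglyMeasurable[ℱ (t + 1)] (hloss t)) →
            (∀ t, StronglyMeasurable[ℱ (t + 1)] (hnorm t)) →
            (∀ t, 1 ≤ t →
              μ[hloss t|ℱ t] =ᵐ[μ] fun ω => gradient Loracle (θ t ω)) →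
            (∀ t, 1 ≤ t → ∀ᵐ ω ∂μ, ‖hloss t ω‖ ≤ Gt) →
            (∀ t, 1 ≤ t → ∀ᵐ ω ∂μ, ‖hnorm t ω‖ ≤ Gn) →
            (∀ t, 1 ≤ t → θ (t + 1) = fun ω => θ t ω -
              (η₀ / Real.sqrt t) •
                (hloss t ω + (α * (ρ₀ / Real.sqrt t)) • hnorm t ω)) →
            ∀ T : ℕ, 1 ≤ T →
              (1 / T : ℝ) * ∑ t ∈ Finset.Icc 1 T,
                  ∫ ω, ‖gradient Loracle (θ t ω)‖ ^ 2 ∂μ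
                ≤ (C₁ + C₂ * Real.log T) / Real.sqrt T := by
  set γ : ℝ := (γ₁.toNNReal : ℝ)
  set B := √(4 * γ * M)
  set K := η₀ * (α * ρ₀) * (B * Gn) + γ / 2 * η₀ ^ 2 * (Gt + α * ρ₀ * Gn) ^ 2
  refine ⟨(2 * M + K) / η₀, K / η₀, ?_⟩
  intro d L hL hlip hM Ω mΩ μ hμ ℱ θ hloss hnorm hθ hloss_meas hnorm_meas hcond hlossG hnormG
    hupd T hT
  have hγ : LipschitzWith γ₁.toNNReal (gradient L) :=
    .of_dist_le' fun x y => by simpa only [dist_eq_norm] using hlip x y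
  have hB : ∀ x, ‖gradient L x‖ ≤ B := fun x =>
    Real.le_sqrt_of_sq_le (sq_norm_gradient_le hL hγ hM x)
  refine mean_le_of_sqrt_descent_step hη₀ (by positivity) (a := fun t => ∫ ω, L (θ t ω) ∂μ)
    (fun t => ?_) (fun t => integral_nonneg fun ω => sq_nonneg _) (fun t ht => ?_) hT
  · simpa using norm_integral_le_of_norm_le_const (μ := μ) (f := fun ω => L (θ t ω))
      (ae_of_all _ fun ω => (Real.norm_eq_abs _).trans_le (hM (θ t ω)))
  · rw [hupd t ht]
    refine (mul_integral_sq_norm_gradient_le_of_descent_step (η := η₀ / √t)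
      (c := α * (ρ₀ / √t)) hL hγ hM hB (by positivity) (by positivity) (ℱ.le t) (hθ t)
      ((hloss_meas t).mono (ℱ.le _)).aestronglyMeasurable
      ((hnorm_meas t).mono (ℱ.le _)).aestronglyMeasurable (hcond t ht) (hlossG t ht)
      (hnormG t ht)).trans ?_
    gcongr
    exact sqrt_schedule_error_le (by positivity) hGt hGn hα hρ₀.le ht

/-- **Proposition (convergence of the oracle-loss gradients along GAM iterates).**
If `L^oracle` is differentiable, `γ₁`-Lipschitz smooth and bounded by `M`, and the GAM
iterates satisfy `θ_{t+1} = θ_t - η_t(h_t^loss + α ρ_t h_t^norm)` with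
`η_t = η₀/√t`, `ρ_t = ρ₀/√t`, where `h_t^loss`, `h_t^norm` are `F_{t+1}`-measurable,
`E[h_t^loss | F_t] = ∇L^oracle(θ_t)` a.s., `‖h_t^loss‖ ≤ G̃` a.s. and `‖h_t^norm‖ ≤ Gn`
a.s., then there are constants `C₁'`, `C₂'` depending only on `γ₁, G̃, Gn, M, η₀, ρ₀, α`
with `(1/T) Σ_{t=1}^T E‖∇L^oracle(θ_t)‖² ≤ (C₁' + C₂' log T)/√T` for all `T ≥ 1`. -/
theorem gam_oracle_convergence
    (γ₁ Gt Gn M α η₀ ρ₀ : ℝ) (hγ₁ : 0 ≤ γ₁) (hGt : 0 ≤ Gt) (hGn : 0 ≤ Gn)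
    (hα : 0 ≤ α) (hη₀ : 0 < η₀) (hρ₀ : 0 < ρ₀) :
    ∃ C₁ C₂ : ℝ,
      ∀ {d : ℕ} (Loracle : EuclideanSpace ℝ (Fin d) → ℝ),
        Differentiable ℝ Loracle →
        (∀ θ₁ θ₂ : EuclideanSpace ℝ (Fin d),
          ‖gradient Loracle θ₁ - gradient Loracle θ₂‖ ≤ γ₁ * ‖θ₁ - θ₂‖) →
        (∀ x, |Loracle x| ≤ M) →
        ∀ (Ω : Type) (mΩ : MeasurableSpace Ω) (μ : Measure Ω),
          IsProbabilityMeasure μ →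
          ∀ (ℱ : Filtration ℕ mΩ)
            (θ hloss hnorm : ℕ → Ω → EuclideanSpace ℝ (Fin d)),
            (∀ t, StronglyMeasurable[ℱ t] (θ t)) →
            (∀ t, StronglyMeasurable[ℱ (t + 1)] (hloss t)) →
            (∀ t, StronglyMeasurable[ℱ (t + 1)] (hnorm t)) →
            (∀ t, 1 ≤ t →
              μ[hloss t|ℱ t] =ᵐ[μ] fun ω => gradient Loracle (θ t ω)) →
            (∀ t, 1 ≤ t → ∀ᵐ ω ∂μ, ‖hloss t ω‖ ≤ Gt) →
            (∀ t, 1 ≤ t → ∀ᵐ ω ∂μ, ‖hnorm t ω‖ ≤ Gn) →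
            (∀ t, 1 ≤ t → θ (t + 1) = fun ω => θ t ω -
              (η₀ / Real.sqrt t) •
                (hloss t ω + (α * (ρ₀ / Real.sqrt t)) • hnorm t ω)) →
            ∀ T : ℕ, 1 ≤ T →
              (1 / T : ℝ) * ∑ t ∈ Finset.Icc 1 T,
                  ∫ ω, ‖gradient Loracle (θ t ω)‖ ^ 2 ∂μ
                ≤ (C₁ + C₂ * Real.log T) / Real.sqrt T :=
  gam_oracle_convergence_general γ₁ Gt Gn M α η₀ ρ₀ hGt hGn hα hη₀ hρ₀
end
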